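/- arXiv:1404.2323 — 4 statements merged into one kernel-verified Lean document; each statement's English description precedes it below -/
import Mathlib

section
/- Let K be a field and let t₁, t₂, t₃, ℓ₁, ℓ₂ be nonzero elements of K satisfying ℓ₁·ℓ₂·t₁·t₂·t₃ = 1 (i.e. ℓ₁ℓ₂ = κ where κ := (t₁t₂t₃)⁻¹), with ℓ₁ ≠ 1 and ℓ₂ ≠ 1. Then ((t₁⁻¹ + t₂⁻¹ + t₃⁻¹ + ℓ₁⁻¹ + ℓ₂⁻¹) − (t₁ + t₂ + t₃ + ℓ₁ + ℓ₂)) / ((1 − ℓ₁⁻¹)·(1 − ℓ₂⁻¹)) = (κ − 1) + (ℓ₁ / ((1 − ℓ₁)·(1 − ℓ₂⁻¹)))·((t₁ + t₂ + t₃) + κ − (t₁⁻¹ + t₂⁻¹ + t₃⁻¹) − κ⁻¹). -/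
/-!
Under the Calabi–Yau condition `κ = ℓ₁ℓ₂`, the weights `tᵢ` enter only through `κ` and the
characters `T = t₁ + t₂ + t₃`, `T* = t₁⁻¹ + t₂⁻¹ + t₃⁻¹`. Since
`ℓ₁ / ((1 - ℓ₁)(1 - ℓ₂⁻¹)) = -1 / ((1 - ℓ₁⁻¹)(1 - ℓ₂⁻¹))`, the `T - T*` terms on the two sides
cancel, and what remains is `(1 - ℓ₁)(1 - ℓ₂) = ℓ₁ℓ₂ (1 - ℓ₁⁻¹)(1 - ℓ₂⁻¹)`.
-/

section

variable {K : Type*} [Field K]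

theorem one_sub_eq_neg_mul_one_sub_inv {x : K} (hx : x ≠ 0) : 1 - x = -x * (1 - x⁻¹) := by
  rw [neg_mul, mul_one_sub, mul_inv_cancel₀ hx, neg_sub]

theorem div_one_sub_mul_one_sub_inv {x y : K} (hx : x ≠ 0) :
    x / ((1 - x) * (1 - y⁻¹)) = -((1 - x⁻¹) * (1 - y⁻¹))⁻¹ := by
  rw [one_sub_eq_neg_mul_one_sub_inv hx, mul_assoc, neg_mul, div_neg, div_mul_cancel_left₀ hx]

theorem one_sub_mul_one_sub_eq {x y : K} (hx : x ≠ 0) (hy : y ≠ 0) :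
    (1 - x) * (1 - y) = x * y * ((1 - x⁻¹) * (1 - y⁻¹)) := by
  rw [one_sub_eq_neg_mul_one_sub_inv hx, one_sub_eq_neg_mul_one_sub_inv hy]
  ring

theorem sub_div_one_sub_inv_mul_one_sub_inv_of_mul_eq {ℓ₁ ℓ₂ κ : K} (hℓ₁ : ℓ₁ ≠ 0)
    (hℓ₂ : ℓ₂ ≠ 0) (hℓ₁1 : ℓ₁ ≠ 1) (hℓ₂1 : ℓ₂ ≠ 1) (hκ : ℓ₁ * ℓ₂ = κ) (T T' : K) :
    ((T' + ℓ₁⁻¹ + ℓ₂⁻¹) - (T + ℓ₁ + ℓ₂)) / ((1 - ℓ₁⁻¹) * (1 - ℓ₂⁻¹)) =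
      (κ - 1) + ℓ₁ / ((1 - ℓ₁) * (1 - ℓ₂⁻¹)) * (T + κ - T' - κ⁻¹) := by
  have hD : (1 - ℓ₁⁻¹) * (1 - ℓ₂⁻¹) ≠ 0 :=
    mul_ne_zero (sub_ne_zero.2 (inv_ne_one.2 hℓ₁1).symm) (sub_ne_zero.2 (inv_ne_one.2 hℓ₂1).symm)
  rw [div_one_sub_mul_one_sub_inv hℓ₁, neg_mul, ← sub_eq_add_neg, ← div_eq_inv_mul,
    eq_sub_iff_add_eq, ← add_div, div_eq_iff hD, ← hκ]
  linear_combination one_sub_mul_one_sub_eq hℓ₁ hℓ₂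

end

theorem deg0class1_identity_general {K : Type*} [Field K]
    (t₁ t₂ t₃ ℓ₁ ℓ₂ : K)
    (hℓ₁ : ℓ₁ ≠ 0) (hℓ₂ : ℓ₂ ≠ 0)
    (hCY : ℓ₁ * ℓ₂ * t₁ * t₂ * t₃ = 1)
    (hℓ₁1 : ℓ₁ ≠ 1) (hℓ₂1 : ℓ₂ ≠ 1) :
    ((t₁⁻¹ + t₂⁻¹ + t₃⁻¹ + ℓ₁⁻¹ + ℓ₂⁻¹) - (t₁ + t₂ + t₃ + ℓ₁ + ℓ₂)) /
        ((1 - ℓ₁⁻¹) * (1 - ℓ₂⁻¹)) =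
      ((t₁ * t₂ * t₃)⁻¹ - 1) +
        (ℓ₁ / ((1 - ℓ₁) * (1 - ℓ₂⁻¹))) *
          ((t₁ + t₂ + t₃) + (t₁ * t₂ * t₃)⁻¹ -
            (t₁⁻¹ + t₂⁻¹ + t₃⁻¹) - ((t₁ * t₂ * t₃)⁻¹)⁻¹) := by
  have hκ : ℓ₁ * ℓ₂ = (t₁ * t₂ * t₃)⁻¹ := eq_inv_of_mul_eq_one_left (by rw [← hCY]; ring)
  exact sub_div_one_sub_inv_mul_one_sub_inv_of_mul_eq hℓ₁ hℓ₂ hℓ₁1 hℓ₂1 hκ _ _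

/-- Character-level form of the K-theory identity
`(T*Z − TZ)|_X / ((1 − 𝓛₁⁻¹)(1 − 𝓛₂⁻¹)) = 𝒦_X − 𝒪_X + 𝓛₁/((1 − 𝓛₁)(1 − 𝓛₂⁻¹))·(TX + 𝒦_X − T*X − 𝒦_X*)`
with weights `t₁, t₂, t₃` on `TX`, weights `ℓ₁, ℓ₂` on `𝓛₁, 𝓛₂`, and
`κ = (t₁t₂t₃)⁻¹`, under the Calabi–Yau condition `ℓ₁ℓ₂t₁t₂t₃ = 1`. -/
theorem deg0class1_identity {K : Type*} [Field K]
    (t₁ t₂ t₃ ℓ₁ ℓ₂ : K)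
    (ht₁ : t₁ ≠ 0) (ht₂ : t₂ ≠ 0) (ht₃ : t₃ ≠ 0)
    (hℓ₁ : ℓ₁ ≠ 0) (hℓ₂ : ℓ₂ ≠ 0)
    (hCY : ℓ₁ * ℓ₂ * t₁ * t₂ * t₃ = 1)
    (hℓ₁1 : ℓ₁ ≠ 1) (hℓ₂1 : ℓ₂ ≠ 1) :
    ((t₁⁻¹ + t₂⁻¹ + t₃⁻¹ + ℓ₁⁻¹ + ℓ₂⁻¹) - (t₁ + t₂ + t₃ + ℓ₁ + ℓ₂)) /
        ((1 - ℓ₁⁻¹) * (1 - ℓ₂⁻¹)) =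
      ((t₁ * t₂ * t₃)⁻¹ - 1) +
        (ℓ₁ / ((1 - ℓ₁) * (1 - ℓ₂⁻¹))) *
          ((t₁ + t₂ + t₃) + (t₁ * t₂ * t₃)⁻¹ -
            (t₁⁻¹ + t₂⁻¹ + t₃⁻¹) - ((t₁ * t₂ * t₃)⁻¹)⁻¹) :=
  deg0class1_identity_general t₁ t₂ t₃ ℓ₁ ℓ₂ hℓ₁ hℓ₂ hCY hℓ₁1 hℓ₂1
end

section
/- Let K be a field and let s₁, s₂, s₃, s₄, s₅ be nonzero elements of K with s₁·s₂·s₃·s₄·s₅ = 1 and sᵢ² ≠ 1 for every i. Then (∑_{i=1}^{5} sᵢ⁻² − ∑_{i=1}^{5} sᵢ²) / ∏_{i=1}^{5} (sᵢ − sᵢ⁻¹) = ((s₁s₂s₃)⁻¹ − s₁s₂s₃) / ∏_{i=1}^{3} (sᵢ − sᵢ⁻¹) + (∏_{1 ≤ i < j ≤ 3} (sᵢsⱼ − sᵢ⁻¹sⱼ⁻¹)) / ∏_{i=1}^{5} (sᵢ − sᵢ⁻¹). -/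
/-!
Write `[x] = x - x⁻¹`. The numerator `∑ sᵢ⁻² - ∑ sᵢ²` splits as
`(a⁻¹ - a) [s₄] [s₅] + [s₁s₂] [s₁s₃] [s₂s₃]` with `a = s₁s₂s₃`: the last term accounts
for `s₁, s₂, s₃` up to a correction `a² - a⁻²`, and since `a⁻¹ = s₄s₅` the first term
accounts for `s₄, s₅` and cancels that correction. Dividing by `∏ [sᵢ]` and cancelling
`[s₄] [s₅]` in the first summand gives the identity.
-/

namespace Id0cl

variable {K : Type*} [Field K]

lemma sub_inv_ne_zero {x : K} (hx : x ≠ 0) (hx2 : x ^ 2 ≠ 1) : x - x⁻¹ ≠ 0 := by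
  intro h
  apply hx2
  rw [sq]
  nth_rewrite 2 [sub_eq_zero.1 h]
  exact mul_inv_cancel₀ hx

lemma pairwise_prod_sub_inv {x y z : K} (hx : x ≠ 0) (hy : y ≠ 0) (hz : z ≠ 0) :
    (x * y - x⁻¹ * y⁻¹) * (x * z - x⁻¹ * z⁻¹) * (y * z - y⁻¹ * z⁻¹) =
      (x⁻¹ ^ 2 + y⁻¹ ^ 2 + z⁻¹ ^ 2) - (x ^ 2 + y ^ 2 + z ^ 2) -
        ((x * y * z)⁻¹ ^ 2 - (x * y * z) ^ 2) := by
  field_simp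
  ring

lemma inv_sub_mul_sub_inv_mul_sub_inv {a u v : K} (hu : u ≠ 0) (hv : v ≠ 0)
    (h : a * u * v = 1) :
    (a⁻¹ - a) * (u - u⁻¹) * (v - v⁻¹) =
      (a⁻¹ ^ 2 - a ^ 2) + (u⁻¹ ^ 2 + v⁻¹ ^ 2) - (u ^ 2 + v ^ 2) := by
  obtain rfl : a = (u * v)⁻¹ := eq_inv_of_mul_eq_one_left (by rwa [← mul_assoc])
  field_simp
  ring

end Id0cl

open Id0cl in
theorem id0cl_identity_general {K : Type*} [Field K]
    (s₁ s₂ s₃ s₄ s₅ : K)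
    (h₁ : s₁ ≠ 0) (h₂ : s₂ ≠ 0) (h₃ : s₃ ≠ 0) (h₄ : s₄ ≠ 0) (h₅ : s₅ ≠ 0)
    (hprod : s₁ * s₂ * s₃ * s₄ * s₅ = 1)
    (hs₄ : s₄ ^ 2 ≠ 1) (hs₅ : s₅ ^ 2 ≠ 1) :
    ((s₁⁻¹ ^ 2 + s₂⁻¹ ^ 2 + s₃⁻¹ ^ 2 + s₄⁻¹ ^ 2 + s₅⁻¹ ^ 2) -
        (s₁ ^ 2 + s₂ ^ 2 + s₃ ^ 2 + s₄ ^ 2 + s₅ ^ 2)) /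
      ((s₁ - s₁⁻¹) * (s₂ - s₂⁻¹) * (s₃ - s₃⁻¹) * (s₄ - s₄⁻¹) * (s₅ - s₅⁻¹)) =
      ((s₁ * s₂ * s₃)⁻¹ - s₁ * s₂ * s₃) /
        ((s₁ - s₁⁻¹) * (s₂ - s₂⁻¹) * (s₃ - s₃⁻¹)) +
      ((s₁ * s₂ - s₁⁻¹ * s₂⁻¹) * (s₁ * s₃ - s₁⁻¹ * s₃⁻¹) * (s₂ * s₃ - s₂⁻¹ * s₃⁻¹)) /
        ((s₁ - s₁⁻¹) * (s₂ - s₂⁻¹) * (s₃ - s₃⁻¹) * (s₄ - s₄⁻¹) * (s₅ - s₅⁻¹)) := by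
  have numerator_split :
      (s₁⁻¹ ^ 2 + s₂⁻¹ ^ 2 + s₃⁻¹ ^ 2 + s₄⁻¹ ^ 2 + s₅⁻¹ ^ 2) -
          (s₁ ^ 2 + s₂ ^ 2 + s₃ ^ 2 + s₄ ^ 2 + s₅ ^ 2) =
        ((s₁ * s₂ * s₃)⁻¹ - s₁ * s₂ * s₃) * (s₄ - s₄⁻¹) * (s₅ - s₅⁻¹) +
          (s₁ * s₂ - s₁⁻¹ * s₂⁻¹) * (s₁ * s₃ - s₁⁻¹ * s₃⁻¹) * (s₂ * s₃ - s₂⁻¹ * s₃⁻¹) := by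
    linear_combination -inv_sub_mul_sub_inv_mul_sub_inv h₄ h₅ hprod -
      pairwise_prod_sub_inv h₁ h₂ h₃
  rw [numerator_split, add_div, mul_div_mul_right _ _ (sub_inv_ne_zero h₅ hs₅),
    mul_div_mul_right _ _ (sub_inv_ne_zero h₄ hs₄)]

/-- The identity (id0cl) for `Z = ℂ⁵`: writing `tᵢ = sᵢ²` for the five torus
weights (so `∏ tᵢ = 1`), one has
`(∑ tᵢ⁻¹ − ∑ tᵢ)/∏(tᵢ^{1/2} − tᵢ^{-1/2})
  = (−(t₁t₂t₃)^{1/2} + (t₁t₂t₃)^{-1/2})/∏_{i≤3}(tᵢ^{1/2} − tᵢ^{-1/2})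
    + ∏_{i<j≤3}((tᵢtⱼ)^{1/2} − (tᵢtⱼ)^{-1/2})/∏_{i≤5}(tᵢ^{1/2} − tᵢ^{-1/2})`. -/
theorem id0cl_identity {K : Type*} [Field K]
    (s₁ s₂ s₃ s₄ s₅ : K)
    (h₁ : s₁ ≠ 0) (h₂ : s₂ ≠ 0) (h₃ : s₃ ≠ 0) (h₄ : s₄ ≠ 0) (h₅ : s₅ ≠ 0)
    (hprod : s₁ * s₂ * s₃ * s₄ * s₅ = 1)
    (hs₁ : s₁ ^ 2 ≠ 1) (hs₂ : s₂ ^ 2 ≠ 1) (hs₃ : s₃ ^ 2 ≠ 1)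
    (hs₄ : s₄ ^ 2 ≠ 1) (hs₅ : s₅ ^ 2 ≠ 1) :
    ((s₁⁻¹ ^ 2 + s₂⁻¹ ^ 2 + s₃⁻¹ ^ 2 + s₄⁻¹ ^ 2 + s₅⁻¹ ^ 2) -
        (s₁ ^ 2 + s₂ ^ 2 + s₃ ^ 2 + s₄ ^ 2 + s₅ ^ 2)) /
      ((s₁ - s₁⁻¹) * (s₂ - s₂⁻¹) * (s₃ - s₃⁻¹) * (s₄ - s₄⁻¹) * (s₅ - s₅⁻¹)) =
      ((s₁ * s₂ * s₃)⁻¹ - s₁ * s₂ * s₃) /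
        ((s₁ - s₁⁻¹) * (s₂ - s₂⁻¹) * (s₃ - s₃⁻¹)) +
      ((s₁ * s₂ - s₁⁻¹ * s₂⁻¹) * (s₁ * s₃ - s₁⁻¹ * s₃⁻¹) * (s₂ * s₃ - s₂⁻¹ * s₃⁻¹)) /
        ((s₁ - s₁⁻¹) * (s₂ - s₂⁻¹) * (s₃ - s₃⁻¹) * (s₄ - s₄⁻¹) * (s₅ - s₅⁻¹)) :=
  id0cl_identity_general s₁ s₂ s₃ s₄ s₅ h₁ h₂ h₃ h₄ h₅ hprod hs₄ hs₅
end

section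
/- Let K be a field (or any commutative ring in which the stated inverses exist) and let t₁, …, t₅ be nonzero elements with t₁·t₂·t₃·t₄·t₅ = 1. Let A denote the ten-element family (t₁, …, t₅, t₁⁻¹, …, t₅⁻¹); write e_k(A) for the k-th elementary symmetric polynomial of A, h₂(A) = ∑_{1 ≤ i ≤ j ≤ 10} A_i·A_j for the complete homogeneous symmetric polynomial of degree 2 of A, v = t₁ + t₂ + t₃ + t₄ + t₅, E₊ = e₀(t) + e₂(t) + e₄(t) and E₋ = e₁(t) + e₃(t) + e₅(t), where e_k(t) are the elementary symmetric polynomials of t₁, …, t₅. Then (h₂(A) − 1) − e₁(A) + (e₃(A) − e₂(A) + e₁(A) − 1) + (−e₁(A)·E₊ + E₊ + E₋) = −v·(E₊ − E₋). -/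
/-!
Encode a family `A` by its generating polynomial `∏ (1 + Aᵢ X)`, whose coefficients are the
`e_k(A)`. Appending families multiplies generating polynomials, so
`e_k(t, t⁻¹) = ∑_{i+j=k} e_i(t) e_j(t⁻¹)`; passing to complementary subsets gives
`e_j(t⁻¹) = e_{5-j}(t)` because `∏ tᵢ = 1`; and `h₂ = e₁² - e₂`. The left-hand side thereby becomes
a polynomial in `e₁(t), …, e₄(t)` that collapses to `-e₁ (e₁ - e₂ + e₃ - e₄)`, which is the
right-hand side since `v = e₁` and `E₊ - E₋ = 1 + e₂ + e₄ - e₁ - e₃ - 1`.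
-/

open Finset

/-- The `k`-th elementary symmetric polynomial of a finite family of ring elements. -/
def esymmFam {K : Type*} [CommRing K] {n : ℕ} (A : Fin n → K) (k : ℕ) : K :=
  ∑ S ∈ Finset.univ.powersetCard k, ∏ i ∈ S, A i

/-- The complete homogeneous symmetric polynomial of degree 2 of a finite family,
`h₂(A) = ∑_{i ≤ j} Aᵢ·Aⱼ`. -/
def h2Fam {K : Type*} [CommRing K] {n : ℕ} (A : Fin n → K) : K :=
  ∑ p ∈ Finset.univ.filter (fun p : Fin n × Fin n => p.1 ≤ p.2), A p.1 * A p.2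

open Polynomial

section CommRing

variable {K : Type*} [CommRing K] {n : ℕ}

theorem esymmFam_zero (A : Fin n → K) : esymmFam A 0 = 1 := by
  simp [esymmFam]

theorem esymmFam_one (A : Fin n → K) : esymmFam A 1 = ∑ i, A i := by
  simp [esymmFam, powersetCard_one]

theorem esymmFam_self (A : Fin n → K) : esymmFam A n = ∏ i, A i := by
  simpa [esymmFam] using
    congrArg (fun s => ∑ S ∈ s, ∏ i ∈ S, A i) (powersetCard_self (univ : Finset (Fin n)))

theorem coeff_prod_one_add_C_mul_X (A : Fin n → K) (k : ℕ) :
    (∏ i, (1 + C (A i) * X)).coeff k = esymmFam A k := by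
  rw [prod_one_add, finsetSum_coeff, esymmFam, powersetCard_eq_filter, sum_filter]
  refine sum_congr rfl fun S _ => ?_
  rw [prod_mul_distrib, ← map_prod, prod_const, coeff_C_mul_X_pow]
  simp only [eq_comm]

theorem esymmFam_append {m : ℕ} (s : Fin m → K) (t : Fin n → K) (k : ℕ) :
    esymmFam (Fin.append s t) k = ∑ p ∈ antidiagonal k, esymmFam s p.1 * esymmFam t p.2 := by
  simp only [← coeff_prod_one_add_C_mul_X, Fin.prod_univ_add, Fin.append_left, Fin.append_right,
    coeff_mul]

theorem esymmFam_two_eq_sum_lt (A : Fin n → K) :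
    esymmFam A 2 = ∑ p ∈ univ.filter (fun p : Fin n × Fin n => p.1 < p.2), A p.1 * A p.2 := by
  symm
  refine sum_bij (fun p _ => {p.1, p.2}) ?_ ?_ ?_ ?_
  · intro p hp
    simp only [mem_filter, mem_univ, true_and] at hp
    simp [mem_powersetCard, card_pair hp.ne]
  · intro p hp q hq h
    simp only [mem_filter, mem_univ, true_and] at hp hq
    have := congrArg ((↑) : Finset (Fin n) → Set (Fin n)) h
    rw [coe_pair, coe_pair, Set.pair_eq_pair_iff] at this
    rcases this with ⟨h1, h2⟩ | ⟨h1, h2⟩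
    · exact Prod.ext h1 h2
    · exact absurd (h1 ▸ h2 ▸ hp) hq.not_gt
  · intro S hS
    obtain ⟨x, y, hxy, rfl⟩ := card_eq_two.1 (mem_powersetCard.1 hS).2
    rcases hxy.lt_or_gt with h | h
    · exact ⟨(x, y), by simpa using h, rfl⟩
    · exact ⟨(y, x), by simpa using h, pair_comm y x⟩
  · intro p hp
    simp only [mem_filter, mem_univ, true_and] at hp
    rw [prod_pair hp.ne]

theorem h2Fam_eq_esymmFam_one_sq_sub_esymmFam_two (A : Fin n → K) :
    h2Fam A = esymmFam A 1 ^ 2 - esymmFam A 2 := by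
  have hsq : esymmFam A 1 ^ 2 = ∑ p : Fin n × Fin n, A p.1 * A p.2 := by
    rw [esymmFam_one, sq, sum_mul_sum, ← univ_product_univ, sum_product]
  have hswap : ∑ p ∈ univ.filter (fun p : Fin n × Fin n => ¬ p.1 ≤ p.2), A p.1 * A p.2 =
      esymmFam A 2 := by
    rw [esymmFam_two_eq_sum_lt]
    refine sum_nbij' Prod.swap Prod.swap ?_ ?_ ?_ ?_ ?_ <;> simp [mul_comm]
  rw [h2Fam, ← hswap, hsq,
    ← sum_filter_add_sum_filter_not univ (fun p : Fin n × Fin n => p.1 ≤ p.2)]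
  ring

end CommRing

theorem esymmFam_inv_mul_prod {K : Type*} [Field K] {n : ℕ} {t : Fin n → K} (ht : ∀ i, t i ≠ 0)
    {k : ℕ} (hk : k ≤ n) : esymmFam (fun i => (t i)⁻¹) k * ∏ i, t i = esymmFam t (n - k) := by
  rw [esymmFam, sum_mul]
  refine sum_nbij' compl compl ?_ ?_ ?_ ?_ ?_
  · intro S hS
    simp only [mem_powersetCard_univ] at hS ⊢
    simp [card_compl, hS]
  · intro S hS
    simp only [mem_powersetCard_univ] at hS ⊢
    simp [card_compl, hS]; omega
  · simp
  · simp
  · intro S _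
    rw [← prod_mul_prod_compl S t, ← mul_assoc, prod_inv_distrib,
      inv_mul_cancel₀ (prod_ne_zero_iff.2 fun i _ => ht i), one_mul]

/-- Character identity underlying the Proposition of [Zth] on the linearized field
content of 11-dimensional supergravity on a Kähler 10-fold: with weights
`t₁,…,t₅` on `T^{1,0}Z` satisfying `∏ tᵢ = 1`, and `A` the ten-element family
`(t₁,…,t₅,t₁⁻¹,…,t₅⁻¹)`, the total character of
(traceless metric) − (diffeomorphisms) + (3-form modulo exact) + (RS field modulo exact)
equals `−v·(Eplus − Eminus)`, i.e. the character of `−T^{1,0}⊗(S₊ − S₋)`. -/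
theorem sugra_field_content {K : Type*} [Field K]
    (t : Fin 5 → K) (ht : ∀ i, t i ≠ 0) (hprod : ∏ i, t i = 1) :
    ∀ (A : Fin 10 → K), A = Fin.append t (fun i => (t i)⁻¹) →
    ∀ v Eplus Eminus : K,
      v = t 0 + t 1 + t 2 + t 3 + t 4 →
      Eplus = esymmFam t 0 + esymmFam t 2 + esymmFam t 4 →
      Eminus = esymmFam t 1 + esymmFam t 3 + esymmFam t 5 →
      (h2Fam A - 1) - esymmFam A 1 +
        (esymmFam A 3 - esymmFam A 2 + esymmFam A 1 - 1) +
        (-(esymmFam A 1) * Eplus + Eplus + Eminus) = -v * (Eplus - Eminus) := by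
  rintro A rfl v Eplus Eminus rfl rfl rfl
  have hinv (k : ℕ) (hk : k ≤ 5) : esymmFam (fun i => (t i)⁻¹) k = esymmFam t (5 - k) := by
    simpa [hprod] using esymmFam_inv_mul_prod ht hk
  have hv : t 0 + t 1 + t 2 + t 3 + t 4 = esymmFam t 1 := by
    rw [esymmFam_one, Fin.sum_univ_five]
  rw [hv, h2Fam_eq_esymmFam_one_sq_sub_esymmFam_two]
  simp only [esymmFam_append, Nat.sum_antidiagonal_eq_sum_range_succ_mk, sum_range_succ,
    sum_range_zero]
  rw [hinv 0 (by norm_num), hinv 1 (by norm_num), hinv 2 (by norm_num), hinv 3 (by norm_num)]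
  have he5 : esymmFam t 5 = 1 := (esymmFam_self t).trans hprod
  rw [esymmFam_zero, he5]
  ring
end

section
/- Let G be a commutative group (written multiplicatively), let κ ∈ G, and let m : G → ℤ be a finitely supported function satisfying m(κ·g⁻¹) = −m(g) for all g ∈ G. Call a subset P ⊆ G a polarization if P is contained in the support of m and for every g with m(g) ≠ 0 exactly one of the two conditions 'g ∈ P' and 'κ·g⁻¹ ∈ P' holds. Then: (1) for any two polarizations P and P′, the element (∏_{g ∈ P} g^{m(g)}) · (∏_{g ∈ P′} g^{m(g)})⁻¹ is an integer power of κ; and (2) for any polarization P, the element (∏_{g ∈ P} g^{m(g)})² · (∏_{g ∈ supp m} g^{m(g)})⁻¹ is an integer power of κ. -/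
/-!
Pass to the quotient `G ⧸ ⟨κ⟩`. There `σ g = κ * g⁻¹` satisfies
`(σ g) ^ m (σ g) = κ ^ (-m g) * g ^ m g ≡ g ^ m g`, so the class of `g ^ m g` is constant on the
`σ`-orbits `{g, σ g}` of the support. A polarization picks one point of each orbit, so two
polarizations give the same product of classes, and the whole support gives its square.
-/

open Finset

/-- A polarization for a finitely supported weight multiplicity function `m` on the
character group `G`, antisymmetric under `g ↦ κ·g⁻¹`: a subset `P` of the support of `m`
such that for every `g` with `m g ≠ 0`, exactly one of `g ∈ P` and `κ·g⁻¹ ∈ P` holds. -/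
def IsPolarization {G : Type*} [CommGroup G] (κ : G) (m : G →₀ ℤ) (P : Finset G) : Prop :=
  P ⊆ m.support ∧ ∀ g : G, m g ≠ 0 → Xor' (g ∈ P) (κ * g⁻¹ ∈ P)

section Polarization

variable {α M : Type*} [CommMonoid M] {σ : α → α} {s P P' : Finset α}

theorem apply_mem_of_xor_of_notMem (hP : ∀ a ∈ s, Xor (a ∈ P) (σ a ∈ P)) {a : α}
    (ha : a ∈ s) (haP : a ∉ P) : σ a ∈ P :=
  (hP a ha).or.resolve_left haP

theorem apply_notMem_of_xor_of_mem (hP : ∀ a ∈ s, Xor (a ∈ P) (σ a ∈ P)) {a : α}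
    (ha : a ∈ s) (haP : a ∈ P) : σ a ∉ P :=
  fun h => (hP a ha).elim (fun h' => h'.2 h) (fun h' => h'.2 haP)

open Classical in
theorem prod_eq_prod_of_xor (hσ : Function.Involutive σ) {f : α → M} (hf : ∀ a, f (σ a) = f a)
    (hPs : P ⊆ s) (hP : ∀ a ∈ s, Xor (a ∈ P) (σ a ∈ P))
    (hP's : P' ⊆ s) (hP' : ∀ a ∈ s, Xor (a ∈ P') (σ a ∈ P')) :
    ∏ a ∈ P, f a = ∏ a ∈ P', f a := by
  have maps_to {P P' : Finset α} (hPs : P ⊆ s) (hP' : ∀ a ∈ s, Xor (a ∈ P') (σ a ∈ P')) :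
      ∀ a ∈ P, (if a ∈ P' then a else σ a) ∈ P' := by
    intro a ha
    split_ifs with h
    · exact h
    · exact apply_mem_of_xor_of_notMem hP' (hPs ha) h
  have left_inv {P P' : Finset α} (hPs : P ⊆ s) (hP : ∀ a ∈ s, Xor (a ∈ P) (σ a ∈ P)) :
      ∀ a ∈ P, (if (if a ∈ P' then a else σ a) ∈ P then (if a ∈ P' then a else σ a)
        else σ (if a ∈ P' then a else σ a)) = a := by
    intro a ha
    by_cases h : a ∈ P'
    · simp [h, ha]
    · simp [h, apply_notMem_of_xor_of_mem hP (hPs ha) ha, hσ a]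
  -- `a ∈ P` is matched with whichever of `a`, `σ a` lies in `P'`
  refine prod_nbij' (fun a => if a ∈ P' then a else σ a) (fun a => if a ∈ P then a else σ a)
    (maps_to hPs hP') (maps_to hP's hP) (left_inv hPs hP) (left_inv hP's hP') fun a _ => ?_
  split_ifs <;> simp [hf]

theorem prod_eq_sq_prod_of_xor (hσ : Function.Involutive σ) {f : α → M}
    (hf : ∀ a, f (σ a) = f a) (hs : ∀ a ∈ s, σ a ∈ s)
    (hPs : P ⊆ s) (hP : ∀ a ∈ s, Xor (a ∈ P) (σ a ∈ P)) :
    ∏ a ∈ s, f a = (∏ a ∈ P, f a) ^ 2 := by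
  classical
  have hs_eq : s = P ∪ P.image σ := by
    ext a
    refine ⟨fun ha => ?_, ?_⟩
    · by_cases haP : a ∈ P
      · exact mem_union_left _ haP
      · exact mem_union_right _ (mem_image.2 ⟨σ a, apply_mem_of_xor_of_notMem hP ha haP, hσ a⟩)
    · intro ha
      rcases mem_union.1 ha with ha | ha
      · exact hPs ha
      · obtain ⟨b, hb, rfl⟩ := mem_image.1 ha
        exact hs b (hPs hb)
  have hdisj : Disjoint P (P.image σ) := by
    refine disjoint_left.2 fun a haP ha => ?_
    obtain ⟨b, hb, rfl⟩ := mem_image.1 ha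
    exact apply_notMem_of_xor_of_mem hP (hPs hb) hb haP
  rw [hs_eq, prod_union hdisj, prod_image hσ.injective.injOn, sq]
  simp only [hf]

end Polarization

section Weights

variable {G : Type*} [CommGroup G] {κ : G}

theorem exists_zpow_eq_mul_inv_of_coe_eq {x y : G}
    (h : (x : G ⧸ Subgroup.zpowers κ) = y) : ∃ k : ℤ, x * y⁻¹ = κ ^ k := by
  obtain ⟨k, hk⟩ := Subgroup.mem_zpowers_iff.1 (QuotientGroup.eq_iff_div_mem.1 h)
  exact ⟨k, by rw [← div_eq_mul_inv, hk]⟩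

theorem coe_zpow_apply_reflect_eq {m : G →₀ ℤ} (hm : ∀ g : G, m (κ * g⁻¹) = -m g) (g : G) :
    (((κ * g⁻¹) ^ m (κ * g⁻¹) : G) : G ⧸ Subgroup.zpowers κ) = ((g ^ m g : G) : _) := by
  have h : (κ * g⁻¹) ^ m (κ * g⁻¹) / g ^ m g = κ ^ (-m g) := by
    rw [hm, mul_zpow, inv_zpow', neg_neg, mul_div_cancel_right]
  rw [QuotientGroup.eq_iff_div_mem, h]
  exact Subgroup.zpow_mem_zpowers κ _

end Weights

/-- Weight-theoretic content of the Lemma of Section 7.2: for a virtual normal bundle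
with weight multiplicities `m` satisfying `m(κ·g⁻¹) = −m(g)`,
(1) `det 𝒩₊` is independent of the choice of chamber (polarization) modulo powers of `κ`;
(2) `det 𝒩 = (det 𝒩₊)²` modulo powers of `κ`. -/
theorem det_N_plus_chamber_independence {G : Type*} [CommGroup G]
    (κ : G) (m : G →₀ ℤ) (hm : ∀ g : G, m (κ * g⁻¹) = -m g) :
    (∀ P P' : Finset G, IsPolarization κ m P → IsPolarization κ m P' →
      ∃ k : ℤ, (∏ g ∈ P, g ^ m g) * (∏ g ∈ P', g ^ m g)⁻¹ = κ ^ k) ∧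
    (∀ P : Finset G, IsPolarization κ m P →
      ∃ k : ℤ, (∏ g ∈ P, g ^ m g) ^ 2 * (∏ g ∈ m.support, g ^ m g)⁻¹ = κ ^ k) := by
  have hσ : Function.Involutive fun g : G => κ * g⁻¹ := fun g => by simp
  have hsupp : ∀ g ∈ m.support, κ * g⁻¹ ∈ m.support := fun g hg => by
    simpa [hm] using hg
  have hxor {P : Finset G} (hP : IsPolarization κ m P) :
      ∀ g ∈ m.support, Xor (g ∈ P) (κ * g⁻¹ ∈ P) :=
    fun g hg => hP.2 g (Finsupp.mem_support_iff.1 hg)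
  refine ⟨fun P P' hP hP' => exists_zpow_eq_mul_inv_of_coe_eq ?_,
    fun P hP => exists_zpow_eq_mul_inv_of_coe_eq ?_⟩
  · rw [QuotientGroup.mk_prod, QuotientGroup.mk_prod]
    exact prod_eq_prod_of_xor hσ (coe_zpow_apply_reflect_eq hm) hP.1 (hxor hP) hP'.1 (hxor hP')
  · rw [QuotientGroup.mk_pow, QuotientGroup.mk_prod, QuotientGroup.mk_prod]
    exact (prod_eq_sq_prod_of_xor hσ (coe_zpow_apply_reflect_eq hm) hsupp hP.1 (hxor hP)).symm
end
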